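/- arXiv:1206.5674 — 6 statements merged into one kernel-verified Lean document; each statement's English description precedes it below -/
import Mathlib

section
/- Let P(t,x,·) be a family of probability measures on a measurable space (E,𝓔) indexed by t ∈ [0,∞) and x ∈ E, satisfying the Chapman–Kolmogorov equation P(t+s,x,Γ) = ∫_E P(s,y,Γ) P(t,x,dy), with joint measurability in (t,x). Fix λ > 0 and a probability measure ν on E. Define the modified transition function 𝑃̃(t,x,Γ) = e^{-λt} P(t,x,Γ) + ∫_E ∫_0^t λ e^{-λs} P(s,y,Γ) ds ν(dy). Then 𝑃̃ also satisfies the Chapman–Kolmogorov equation: 𝑃̃(t+u,x,Γ) = ∫_E 𝑃̃(u,y,Γ) 𝑃̃(t,x,dy) for all t,u ≥ 0. -/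
/-!
Expand `P̃(u, y, Γ)` under `P̃(t, x, dy)`. Its restart part does not depend on `y`, so it
integrates against the probability measure `P̃(t, x, ·)` to itself and supplies the part of
the restart integral over `(0, u]`. Its no-restart part `e^{-λu} P(u, y, Γ)` composes, by the
Chapman–Kolmogorov equation for `P`, with `e^{-λt} P(t, x, ·)` to `e^{-λ(t+u)} P(t + u, x, Γ)`
and with the restart part of `P̃(t, x, ·)` to the restart integral over `(0, t]` shifted by
`u`; since `λ e^{-λ(s+u)} = e^{-λu} λ e^{-λs}`, that is the part of the restart integral over
`(u, t + u]`.
-/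

open Real MeasureTheory
open scoped ENNReal

namespace RestartKernel

noncomputable def expDensity (lam s : ℝ) : ℝ≥0∞ := ENNReal.ofReal (lam * exp (-(lam * s)))

@[fun_prop]
theorem measurable_expDensity (lam : ℝ) : Measurable (expDensity lam) := by
  unfold expDensity; fun_prop

theorem expDensity_add (lam s u : ℝ) :
    expDensity lam (s + u) = ENNReal.ofReal (exp (-(lam * u))) * expDensity lam s := by
  rw [expDensity, expDensity, ← ENNReal.ofReal_mul (exp_nonneg _)]
  congr 1
  rw [show -(lam * (s + u)) = -(lam * u) + -(lam * s) by ring, exp_add]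
  ring

theorem lintegral_expDensity_Ioc {lam : ℝ} (hlam : 0 ≤ lam) {r : ℝ} (hr : 0 ≤ r) :
    ∫⁻ s in Set.Ioc 0 r, expDensity lam s = ENNReal.ofReal (1 - exp (-(lam * r))) := by
  have hderiv : ∀ s ∈ Set.uIcc 0 r,
      HasDerivAt (fun s => -exp (-(lam * s))) (lam * exp (-(lam * s))) s := fun s _ =>
    (((hasDerivAt_id' s).const_mul lam).fun_neg.exp).fun_neg.congr_deriv (by ring)
  have hcont : Continuous fun s => lam * exp (-(lam * s)) := by fun_prop
  simp only [expDensity]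
  rw [← ofReal_integral_eq_lintegral_ofReal hcont.integrableOn_Ioc
      (Filter.Eventually.of_forall fun s => by positivity),
    ← intervalIntegral.integral_of_le hr,
    intervalIntegral.integral_eq_sub_of_hasDerivAt hderiv (hcont.intervalIntegrable _ _)]
  simp only [mul_zero, neg_zero, exp_zero, sub_neg_eq_add, neg_add_eq_sub]

theorem setLIntegral_Ioc_add_right (g : ℝ → ℝ≥0∞) (a b u : ℝ) :
    ∫⁻ s in Set.Ioc (a + u) (b + u), g s = ∫⁻ s in Set.Ioc a b, g (s + u) := by
  rw [← (measurePreserving_add_right volume u).setLIntegral_comp_preimage_emb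
    (measurableEmbedding_addRight u), Set.preimage_add_const_Ioc, add_sub_cancel_right,
    add_sub_cancel_right]

theorem ofReal_exp_neg_mul_add (lam t u : ℝ) :
    ENNReal.ofReal (exp (-(lam * (t + u)))) =
      ENNReal.ofReal (exp (-(lam * u))) * ENNReal.ofReal (exp (-(lam * t))) := by
  rw [← ENNReal.ofReal_mul (exp_nonneg _), ← exp_add]
  ring_nf

variable {E : Type*} [MeasurableSpace E] {P : ℝ → E → Measure E}

noncomputable def restart (P : ℝ → E → Measure E) (lam : ℝ) (ν : Measure E) (t : ℝ)
    (x : E) : Measure E :=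
  ENNReal.ofReal (exp (-(lam * t))) • P t x +
    ((volume.restrict (Set.Ioc 0 t)).withDensity (expDensity lam)).bind fun s => ν.bind (P s)

theorem measurable_bind_of_measurable_uncurry (hP : Measurable (Function.uncurry P))
    (ν : Measure E) [SFinite ν] :
    Measurable fun s => ν.bind (P s) := by
  refine Measure.measurable_of_measurable_coe _ fun Γ hΓ => ?_
  have hbind (s : ℝ) : ν.bind (P s) Γ = ∫⁻ y, P s y Γ ∂ν :=
    Measure.bind_apply hΓ hP.of_uncurry_left.aemeasurable
  simp_rw [hbind]
  exact ((Measure.measurable_coe hΓ).comp hP).lintegral_prod_right'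

theorem lintegral_restart (hP : Measurable (Function.uncurry P)) (lam : ℝ) (ν : Measure E)
    [SFinite ν] {f : E → ℝ≥0∞} (hf : Measurable f) (t : ℝ) (x : E) :
    ∫⁻ y, f y ∂restart P lam ν t x =
      ENNReal.ofReal (exp (-(lam * t))) * ∫⁻ y, f y ∂P t x +
        ∫⁻ s in Set.Ioc 0 t, expDensity lam s * ∫⁻ y, ∫⁻ z, f z ∂P s y ∂ν := by
  have hbind := measurable_bind_of_measurable_uncurry hP ν
  have hint : Measurable fun s => ∫⁻ y, f y ∂ν.bind (P s) :=
    (Measure.measurable_lintegral hf).comp hbind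
  rw [restart, lintegral_add_measure, lintegral_smul_measure, smul_eq_mul,
    Measure.lintegral_bind hbind.aemeasurable hf.aemeasurable,
    lintegral_withDensity_eq_lintegral_mul _ (measurable_expDensity lam) hint]
  congr 2 with s
  exact congrArg (expDensity lam s * ·)
    (Measure.lintegral_bind hP.of_uncurry_left.aemeasurable hf.aemeasurable)

theorem restart_apply (hP : Measurable (Function.uncurry P)) (lam : ℝ) (ν : Measure E)
    [SFinite ν] {Γ : Set E} (hΓ : MeasurableSet Γ) (t : ℝ) (x : E) :
    restart P lam ν t x Γ = ENNReal.ofReal (exp (-(lam * t))) * P t x Γ +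
      ∫⁻ s in Set.Ioc 0 t, expDensity lam s * ∫⁻ y, P s y Γ ∂ν := by
  simpa [lintegral_indicator_one hΓ] using
    lintegral_restart hP lam ν (measurable_one.indicator hΓ) t x

theorem isProbabilityMeasure_restart (hP : Measurable (Function.uncurry P))
    (hprob : ∀ t x, IsProbabilityMeasure (P t x)) {lam : ℝ} (hlam : 0 ≤ lam) (ν : Measure E)
    [IsProbabilityMeasure ν] {t : ℝ} (ht : 0 ≤ t) (x : E) :
    IsProbabilityMeasure (restart P lam ν t x) := by
  constructor
  rw [restart_apply hP lam ν MeasurableSet.univ]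
  simp only [measure_univ, lintegral_const, mul_one]
  rw [lintegral_expDensity_Ioc hlam ht, ← ENNReal.ofReal_add (exp_nonneg _)
    (sub_nonneg.2 (exp_le_one_iff.2 (by nlinarith))), add_sub_cancel, ENNReal.ofReal_one]

theorem restart_chapman_kolmogorov (hP : Measurable (Function.uncurry P))
    (hprob : ∀ t x, IsProbabilityMeasure (P t x))
    (hCK : ∀ t s : ℝ, 0 ≤ t → 0 ≤ s → ∀ x : E, ∀ Γ : Set E, MeasurableSet Γ →
      P (t + s) x Γ = ∫⁻ y, P s y Γ ∂(P t x))
    {lam : ℝ} (hlam : 0 ≤ lam) (ν : Measure E) [IsProbabilityMeasure ν]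
    {t u : ℝ} (ht : 0 ≤ t) (hu : 0 ≤ u) (x : E) {Γ : Set E} (hΓ : MeasurableSet Γ) :
    restart P lam ν (t + u) x Γ = ∫⁻ y, restart P lam ν u y Γ ∂restart P lam ν t x := by
  have := isProbabilityMeasure_restart hP hprob hlam ν ht x
  simp_rw [restart_apply hP lam ν hΓ]
  set Q : ℝ → ℝ≥0∞ := fun s => ∫⁻ y, P s y Γ ∂ν
  have hPΓ : Measurable fun y => P u y Γ := (Measure.measurable_coe hΓ).comp hP.of_uncurry_left
  have hQ : Measurable Q := ((Measure.measurable_coe hΓ).comp hP).lintegral_prod_right'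
  have hP_restart : ∫⁻ y, P u y Γ ∂restart P lam ν t x =
      ENNReal.ofReal (exp (-(lam * t))) * P (t + u) x Γ +
        ∫⁻ s in Set.Ioc 0 t, expDensity lam s * Q (s + u) := by
    rw [lintegral_restart hP lam ν hPΓ, hCK t u ht hu x Γ hΓ]
    congr 1
    refine setLIntegral_congr_fun measurableSet_Ioc fun s hs => ?_
    simp_rw [Q, hCK s u hs.1.le hu _ Γ hΓ]
  have hsplit : ∫⁻ s in Set.Ioc 0 (t + u), expDensity lam s * Q s =
      (∫⁻ s in Set.Ioc 0 u, expDensity lam s * Q s) +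
        ENNReal.ofReal (exp (-(lam * u))) *
          ∫⁻ s in Set.Ioc 0 t, expDensity lam s * Q (s + u) := by
    have hshift := setLIntegral_Ioc_add_right (fun s => expDensity lam s * Q s) 0 t u
    rw [zero_add] at hshift
    simp_rw [expDensity_add, mul_assoc] at hshift
    rw [← Set.Ioc_union_Ioc_eq_Ioc hu (le_add_of_nonneg_left ht),
      lintegral_union measurableSet_Ioc (Set.Ioc_disjoint_Ioc_of_le le_rfl), hshift,
      lintegral_const_mul _ (by fun_prop)]
  rw [lintegral_add_left (hPΓ.const_mul _), lintegral_const_mul _ hPΓ, lintegral_const,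
    measure_univ, mul_one, hP_restart, hsplit, ofReal_exp_neg_mul_add]
  ring

end RestartKernel

open RestartKernel in
/-- The restart modification of an honest transition function again satisfies the
Chapman–Kolmogorov equation. -/
theorem modified_kernel_chapman_kolmogorov
    {E : Type*} [MeasurableSpace E]
    (P : ℝ → E → Measure E)
    (hprob : ∀ t x, IsProbabilityMeasure (P t x))
    (hmeas : ∀ Γ : Set E, MeasurableSet Γ → Measurable (fun p : ℝ × E => P p.1 p.2 Γ))
    (hCK : ∀ t s : ℝ, 0 ≤ t → 0 ≤ s → ∀ x : E, ∀ Γ : Set E, MeasurableSet Γ →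
      P (t + s) x Γ = ∫⁻ y, P s y Γ ∂(P t x))
    (lam : ℝ) (hlam : 0 < lam)
    (ν : Measure E) [IsProbabilityMeasure ν]
    (Ptilde : ℝ → E → Measure E)
    (hPtilde : ∀ t x, Ptilde t x =
      ENNReal.ofReal (Real.exp (-(lam * t))) • P t x +
        Measure.bind
          ((volume.restrict (Set.Ioc (0 : ℝ) t)).withDensity
            (fun s => ENNReal.ofReal (lam * Real.exp (-(lam * s)))))
          (fun s => Measure.bind ν (fun y => P s y))) :
    ∀ t u : ℝ, 0 ≤ t → 0 ≤ u → ∀ x : E, ∀ Γ : Set E, MeasurableSet Γ →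
      Ptilde (t + u) x Γ = ∫⁻ y, Ptilde u y Γ ∂(Ptilde t x) := by
  obtain rfl : Ptilde = restart P lam ν := funext fun t => funext (hPtilde t)
  exact fun t u ht hu x Γ hΓ => restart_chapman_kolmogorov
    (Measure.measurable_of_measurable_coe _ hmeas) hprob hCK hlam.le ν ht hu x hΓ
end

section
/- Let P(t,x,Γ) be an honest transition function on a measurable space (E,𝓔) satisfying the Chapman–Kolmogorov equation. Fix λ > 0, w ∈ E, and define q_w(Γ) = ∫_0^∞ λ e^{-λs} P(s,w,Γ) ds and the modified kernel 𝑃̃_w(t,z,Γ) = e^{-λt} P(t,z,Γ) + ∫_0^t λ e^{-λs} P(s,w,Γ) ds. Then q_w is invariant for 𝑃̃_w: for all t ≥ 0 and all Γ ∈ 𝓔, ∫_E 𝑃̃_w(t,z,Γ) q_w(dz) = q_w(Γ). -/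
open Real MeasureTheory ENNReal ProbabilityTheory

/-! The process started from `q_w` and run for time `t` has not restarted with probability
`e^{-λt}`, in which case it sits at time `s + t` of a path from `w` with `s ~ Exp(λ)`.
By memorylessness, `e^{-λt} · λe^{-λs} = λe^{-λ(s+t)}`, so this contributes the part of
`q_w(Γ)` coming from times `u > t`; the restart term supplies exactly the times `u ∈ (0, t]`. -/

lemma setLIntegral_Ioi_exp_density_eq_one {lam : ℝ} (hlam : 0 < lam) :
    ∫⁻ s in Set.Ioi 0, ENNReal.ofReal (lam * Real.exp (-(lam * s))) = 1 := by
  have hsupp : Function.support (exponentialPDF lam) ⊆ Set.Ici 0 :=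
    fun x hx => Set.mem_Ici.2 <| not_lt.1 fun hneg =>
      hx (exponentialPDF_of_neg hneg)
  rw [← lintegral_exponentialPDF_eq_one hlam,
    ← setLIntegral_eq_of_support_subset hsupp, Measure.restrict_congr_set Ioi_ae_eq_Ici.symm]
  exact setLIntegral_congr_fun measurableSet_Ioi fun s hs =>
    (exponentialPDF_of_nonneg (le_of_lt hs)).symm

lemma ofReal_exp_mul_setLIntegral_Ioi_comp_add (lam t : ℝ) (F : ℝ → ℝ≥0∞) :
    ENNReal.ofReal (Real.exp (-(lam * t))) *
        ∫⁻ s in Set.Ioi 0, ENNReal.ofReal (lam * Real.exp (-(lam * s))) * F (s + t)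
      = ∫⁻ u in Set.Ioi t, ENNReal.ofReal (lam * Real.exp (-(lam * u))) * F u := by
  have hdensity : ∀ s : ℝ, ENNReal.ofReal (Real.exp (-(lam * t))) *
      (ENNReal.ofReal (lam * Real.exp (-(lam * s))) * F (s + t))
        = ENNReal.ofReal (lam * Real.exp (-(lam * (s + t)))) * F (s + t) := by
    intro s
    rw [← mul_assoc, ← ofReal_mul (Real.exp_nonneg _), mul_add, neg_add, Real.exp_add]
    ring_nf
  have hpre : (fun s : ℝ => s + t) ⁻¹' Set.Ioi t = Set.Ioi 0 := by
    rw [Set.preimage_add_const_Ioi, sub_self]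
  simp_rw [← lintegral_const_mul' _ _ ofReal_ne_top, hdensity, ← hpre]
  exact (measurePreserving_add_right volume t).setLIntegral_comp_preimage_emb
    (measurableEmbedding_addRight t) (fun u => ENNReal.ofReal (lam * Real.exp (-(lam * u))) * F u)
    (Set.Ioi t)

section BindWithDensity

variable {α β : Type*} [MeasurableSpace α] [MeasurableSpace β]
  {μ : Measure α} {g : α → ℝ≥0∞} {κ : α → Measure β}

lemma bind_withDensity_apply (hg : Measurable g) (hκ : Measurable κ) {s : Set β}
    (hs : MeasurableSet s) :
    (μ.withDensity g).bind κ s = ∫⁻ a, g a * κ a s ∂μ := by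
  rw [Measure.bind_apply hs hκ.aemeasurable,
    lintegral_withDensity_eq_lintegral_mul _ hg
      (show Measurable fun a => κ a s from (Measure.measurable_coe hs).comp hκ)]
  rfl

lemma lintegral_bind_withDensity (hg : Measurable g) (hκ : Measurable κ) {f : β → ℝ≥0∞}
    (hf : Measurable f) :
    ∫⁻ z, f z ∂(μ.withDensity g).bind κ = ∫⁻ a, g a * ∫⁻ z, f z ∂κ a ∂μ := by
  rw [Measure.lintegral_bind hκ.aemeasurable hf.aemeasurable,
    lintegral_withDensity_eq_lintegral_mul _ hg
      (show Measurable fun a => ∫⁻ z, f z ∂κ a from (Measure.measurable_lintegral hf).comp hκ)]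
  rfl

end BindWithDensity

lemma measurable_measure_of_measurable_uncurry {α β E : Type*} [MeasurableSpace α]
    [MeasurableSpace β] [MeasurableSpace E] {P : α → β → Measure E}
    (hmeas : ∀ Γ : Set E, MeasurableSet Γ → Measurable (fun p : α × β => P p.1 p.2 Γ))
    (b : β) : Measurable (fun a => P a b) :=
  Measure.measurable_of_measurable_coe _ fun Γ hΓ =>
    (hmeas Γ hΓ).comp (measurable_id.prodMk measurable_const)

theorem restart_from_point_invariant_measure_general
    {E : Type*} [MeasurableSpace E]
    (P : ℝ → E → Measure E)
    (hprob : ∀ t x, IsProbabilityMeasure (P t x))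
    (hmeas : ∀ Γ : Set E, MeasurableSet Γ → Measurable (fun p : ℝ × E => P p.1 p.2 Γ))
    (hCK : ∀ t s : ℝ, 0 ≤ t → 0 ≤ s → ∀ x : E, ∀ Γ : Set E, MeasurableSet Γ →
      P (t + s) x Γ = ∫⁻ y, P s y Γ ∂(P t x))
    (lam : ℝ) (hlam : 0 < lam) (w : E)
    (qw : Measure E)
    (hqw : qw = Measure.bind
      ((volume.restrict (Set.Ioi (0 : ℝ))).withDensity
        (fun s => ENNReal.ofReal (lam * Real.exp (-(lam * s)))))
      (fun s => P s w)) :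
    ∀ t : ℝ, 0 ≤ t → ∀ Γ : Set E, MeasurableSet Γ →
      (∫⁻ z, (ENNReal.ofReal (Real.exp (-(lam * t))) * P t z Γ +
          ∫⁻ s in Set.Ioc (0 : ℝ) t,
            ENNReal.ofReal (lam * Real.exp (-(lam * s))) * P s w Γ) ∂qw)
        = qw Γ := by
  intro t ht Γ hΓ
  have hg : Measurable fun s : ℝ => ENNReal.ofReal (lam * Real.exp (-(lam * s))) := by
    fun_prop
  have hPw := measurable_measure_of_measurable_uncurry hmeas w
  have hPt : Measurable fun z => P t z Γ :=
    (hmeas Γ hΓ).comp (measurable_const.prodMk measurable_id)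
  have hqw_apply : ∀ Γ', MeasurableSet Γ' →
      qw Γ' = ∫⁻ s in Set.Ioi 0, ENNReal.ofReal (lam * Real.exp (-(lam * s))) * P s w Γ' :=
    fun Γ' hΓ' => hqw ▸ bind_withDensity_apply hg hPw hΓ'
  have hqw_univ : qw Set.univ = 1 := by
    simp [hqw_apply _ MeasurableSet.univ, setLIntegral_Ioi_exp_density_eq_one hlam]
  have hqw_Pt : ∫⁻ z, P t z Γ ∂qw
      = ∫⁻ s in Set.Ioi 0, ENNReal.ofReal (lam * Real.exp (-(lam * s))) * P (s + t) w Γ := by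
    rw [hqw, lintegral_bind_withDensity hg hPw hPt]
    exact setLIntegral_congr_fun measurableSet_Ioi fun s hs => by
      rw [hCK s t (le_of_lt hs) ht w Γ hΓ]
  rw [lintegral_add_left (hPt.const_mul _), lintegral_const, hqw_univ, mul_one,
    lintegral_const_mul _ hPt, hqw_Pt,
    ofReal_exp_mul_setLIntegral_Ioi_comp_add lam t fun u => P u w Γ,
    hqw_apply Γ hΓ, ← Set.Ioc_union_Ioi_eq_Ioi ht,
    lintegral_union measurableSet_Ioi (Set.Ioc_disjoint_Ioi le_rfl), add_comm]

/-- For restart from a fixed point `w`, the measure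
`q_w(Γ) = ∫_0^∞ λ e^{-λs} P(s,w,Γ) ds` is invariant for the modified kernel
`P̃_w(t,z,Γ) = e^{-λt} P(t,z,Γ) + ∫_0^t λ e^{-λs} P(s,w,Γ) ds`. -/
theorem restart_from_point_invariant_measure
    {E : Type*} [MeasurableSpace E]
    (P : ℝ → E → Measure E)
    (hprob : ∀ t x, IsProbabilityMeasure (P t x))
    (hzero : ∀ x : E, ∀ Γ : Set E, MeasurableSet Γ →
      P 0 x Γ = Set.indicator Γ (fun _ => (1 : ℝ≥0∞)) x)
    (hmeas : ∀ Γ : Set E, MeasurableSet Γ → Measurable (fun p : ℝ × E => P p.1 p.2 Γ))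
    (hCK : ∀ t s : ℝ, 0 ≤ t → 0 ≤ s → ∀ x : E, ∀ Γ : Set E, MeasurableSet Γ →
      P (t + s) x Γ = ∫⁻ y, P s y Γ ∂(P t x))
    (lam : ℝ) (hlam : 0 < lam) (w : E)
    (qw : Measure E)
    (hqw : qw = Measure.bind
      ((volume.restrict (Set.Ioi (0 : ℝ))).withDensity
        (fun s => ENNReal.ofReal (lam * Real.exp (-(lam * s)))))
      (fun s => P s w)) :
    ∀ t : ℝ, 0 ≤ t → ∀ Γ : Set E, MeasurableSet Γ →
      (∫⁻ z, (ENNReal.ofReal (Real.exp (-(lam * t))) * P t z Γ +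
          ∫⁻ s in Set.Ioc (0 : ℝ) t,
            ENNReal.ofReal (lam * Real.exp (-(lam * s))) * P s w Γ) ∂qw)
        = qw Γ :=
  restart_from_point_invariant_measure_general P hprob hmeas hCK lam hlam w qw hqw
end

section
/- Let P be an honest transition function satisfying Chapman–Kolmogorov, λ > 0, ν a probability measure on E, 𝑃̃_ν(t,x,Γ) = e^{-λt} P(t,x,Γ) + ∫_E ∫_0^t λ e^{-λs} P(s,y,Γ) ds ν(dy), and q_ν(Γ) = ∫_E ∫_0^∞ λ e^{-λs} P(s,y,Γ) ds ν(dy). Then for every x ∈ E, t ≥ 0, and Γ ∈ 𝓔, |q_ν(Γ) − 𝑃̃_ν(t,x,Γ)| ≤ e^{-λt}. -/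
/-!
Splitting `∫₀^∞ = ∫₀^t + ∫ₜ^∞`, the difference `q_ν(Γ) − P̃_ν(t,x,Γ)` is the `ν`-average of the
tail `∫ₜ^∞ λ e^{-λs} P(s,y,Γ) ds` minus `e^{-λt} P(t,x,Γ)`. Since `0 ≤ P ≤ 1`, both terms lie in
`[0, e^{-λt}]`, and so does the absolute value of their difference.
-/

open Real MeasureTheory Set

section ExponentialWeight

variable {lam : ℝ}

theorem integrableOn_Ioi_mul_exp_neg_mul (hlam : 0 < lam) (a : ℝ) :
    IntegrableOn (fun s => lam * exp (-(lam * s))) (Ioi a) := by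
  have h := (integrableOn_exp_mul_Ioi (neg_neg_of_pos hlam) a).const_mul lam
  simp only [neg_mul] at h
  exact h

theorem integral_Ioi_mul_exp_neg_mul (hlam : 0 < lam) (a : ℝ) :
    ∫ s in Ioi a, lam * exp (-(lam * s)) = exp (-(lam * a)) := by
  simp_rw [integral_const_mul, ← neg_mul, integral_exp_mul_Ioi (neg_neg_of_pos hlam)]
  field_simp

variable {φ : ℝ → ℝ}

theorem integrableOn_Ioi_mul_exp_neg_mul_mul (hlam : 0 < lam) (hφ : Measurable φ)
    (hφ0 : ∀ s, 0 ≤ φ s) (hφ1 : ∀ s, φ s ≤ 1) (a : ℝ) :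
    IntegrableOn (fun s => lam * exp (-(lam * s)) * φ s) (Ioi a) :=
  (integrableOn_Ioi_mul_exp_neg_mul hlam a).mul_bdd hφ.aestronglyMeasurable
    (Filter.Eventually.of_forall fun s => by
      rw [Real.norm_of_nonneg (hφ0 s)]; exact hφ1 s)

theorem integral_Ioi_mul_exp_neg_mul_mul_mem_Icc (hlam : 0 < lam) (hφ : Measurable φ)
    (hφ0 : ∀ s, 0 ≤ φ s) (hφ1 : ∀ s, φ s ≤ 1) (a : ℝ) :
    ∫ s in Ioi a, lam * exp (-(lam * s)) * φ s ∈ Icc 0 (exp (-(lam * a))) := by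
  refine ⟨setIntegral_nonneg measurableSet_Ioi fun s _ => by have := hφ0 s; positivity, ?_⟩
  calc ∫ s in Ioi a, lam * exp (-(lam * s)) * φ s
      ≤ ∫ s in Ioi a, lam * exp (-(lam * s)) :=
        integral_mono (integrableOn_Ioi_mul_exp_neg_mul_mul hlam hφ hφ0 hφ1 a)
          (integrableOn_Ioi_mul_exp_neg_mul hlam a)
          fun s => mul_le_of_le_one_right (by positivity) (hφ1 s)
    _ = exp (-(lam * a)) := integral_Ioi_mul_exp_neg_mul hlam a

end ExponentialWeight

section ParametricExponentialWeight

variable {E : Type*} [MeasurableSpace E] {F : E → ℝ → ℝ} {lam : ℝ}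

theorem integrable_integral_Ioi_mul_exp_neg_mul_mul (hlam : 0 < lam)
    (hF : Measurable (Function.uncurry F)) (hF0 : ∀ y s, 0 ≤ F y s) (hF1 : ∀ y s, F y s ≤ 1)
    (ν : Measure E) [IsFiniteMeasure ν] (a : ℝ) :
    Integrable (fun y => ∫ s in Ioi a, lam * exp (-(lam * s)) * F y s) ν := by
  have hmeas : StronglyMeasurable fun p : E × ℝ => lam * exp (-(lam * p.2)) * F p.1 p.2 :=
    (by fun_prop : Measurable fun p : E × ℝ => lam * exp (-(lam * p.2))).mul hF
      |>.stronglyMeasurable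
  refine Integrable.of_bound
    (hmeas.integral_prod_right' (ν := volume.restrict (Ioi a))).aestronglyMeasurable
    (exp (-(lam * a))) (Filter.Eventually.of_forall fun y => ?_)
  obtain ⟨h0, h1⟩ := integral_Ioi_mul_exp_neg_mul_mul_mem_Icc hlam hF.of_uncurry_left
    (hF0 y) (hF1 y) a
  rwa [Real.norm_of_nonneg h0]

theorem integral_integral_Ioi_mul_exp_neg_mul_mul_mem_Icc (hlam : 0 < lam)
    (hF : Measurable (Function.uncurry F)) (hF0 : ∀ y s, 0 ≤ F y s) (hF1 : ∀ y s, F y s ≤ 1)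
    (ν : Measure E) [IsProbabilityMeasure ν] (a : ℝ) :
    ∫ y, (∫ s in Ioi a, lam * exp (-(lam * s)) * F y s) ∂ν ∈ Icc 0 (exp (-(lam * a))) := by
  have hmem y := integral_Ioi_mul_exp_neg_mul_mul_mem_Icc hlam
    hF.of_uncurry_left (hF0 y) (hF1 y) a
  refine ⟨integral_nonneg fun y => (hmem y).1, ?_⟩
  calc ∫ y, (∫ s in Ioi a, lam * exp (-(lam * s)) * F y s) ∂ν
      ≤ ∫ _, exp (-(lam * a)) ∂ν :=
        integral_mono (integrable_integral_Ioi_mul_exp_neg_mul_mul hlam hF hF0 hF1 ν a)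
          (integrable_const _) fun y => (hmem y).2
    _ = exp (-(lam * a)) := by simp

theorem integral_integral_Ioi_sub_integral_integral_Ioc (hlam : 0 < lam)
    (hF : Measurable (Function.uncurry F)) (hF0 : ∀ y s, 0 ≤ F y s) (hF1 : ∀ y s, F y s ≤ 1)
    (ν : Measure E) [IsFiniteMeasure ν] {t : ℝ} (ht : 0 ≤ t) :
    (∫ y, (∫ s in Ioi 0, lam * exp (-(lam * s)) * F y s) ∂ν) -
        ∫ y, (∫ s in Ioc 0 t, lam * exp (-(lam * s)) * F y s) ∂ν =
      ∫ y, (∫ s in Ioi t, lam * exp (-(lam * s)) * F y s) ∂ν := by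
  have hsplit y : ∫ s in Ioc 0 t, lam * exp (-(lam * s)) * F y s =
      (∫ s in Ioi 0, lam * exp (-(lam * s)) * F y s) -
        ∫ s in Ioi t, lam * exp (-(lam * s)) * F y s := by
    have hint := integrableOn_Ioi_mul_exp_neg_mul_mul hlam hF.of_uncurry_left
      (hF0 y) (hF1 y)
    rw [← intervalIntegral.integral_interval_add_Ioi (hint 0) (hint t),
      intervalIntegral.integral_of_le ht, add_sub_cancel_right]
  simp_rw [hsplit]
  rw [integral_sub (integrable_integral_Ioi_mul_exp_neg_mul_mul hlam hF hF0 hF1 ν 0)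
    (integrable_integral_Ioi_mul_exp_neg_mul_mul hlam hF hF0 hF1 ν t), sub_sub_cancel]

end ParametricExponentialWeight

theorem restart_uniform_exponential_bound_general
    {E : Type*} [MeasurableSpace E]
    (P : ℝ → E → Measure E)
    (hprob : ∀ t x, IsProbabilityMeasure (P t x))
    (hmeas : ∀ Γ : Set E, MeasurableSet Γ → Measurable (fun p : ℝ × E => P p.1 p.2 Γ))
    (lam : ℝ) (hlam : 0 < lam)
    (ν : Measure E) [IsProbabilityMeasure ν] :
    ∀ t : ℝ, 0 ≤ t → ∀ x : E, ∀ Γ : Set E, MeasurableSet Γ →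
      |(∫ y, (∫ s in Set.Ioi (0 : ℝ), lam * Real.exp (-(lam * s)) * (P s y Γ).toReal) ∂ν) -
        (Real.exp (-(lam * t)) * (P t x Γ).toReal +
          ∫ y, (∫ s in Set.Ioc (0 : ℝ) t,
            lam * Real.exp (-(lam * s)) * (P s y Γ).toReal) ∂ν)|
        ≤ Real.exp (-(lam * t)) := by
  intro t ht x Γ hΓ
  set F : E → ℝ → ℝ := fun y s => (P s y Γ).toReal
  have hF : Measurable (Function.uncurry F) :=
    ((hmeas Γ hΓ).comp measurable_swap).ennreal_toReal
  have hF0 y s : 0 ≤ F y s := ENNReal.toReal_nonneg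
  have hF1 y s : F y s ≤ 1 := haveI := hprob s y; measureReal_le_one
  obtain ⟨htail0, htail1⟩ :=
    integral_integral_Ioi_mul_exp_neg_mul_mul_mem_Icc hlam hF hF0 hF1 ν t
  rw [sub_add_eq_sub_sub_swap,
    integral_integral_Ioi_sub_integral_integral_Ioc hlam hF hF0 hF1 ν ht]
  exact abs_sub_le_of_nonneg_of_le htail0 htail1 (mul_nonneg (exp_pos _).le (hF0 x t))
    (mul_le_of_le_one_right (exp_pos _).le (hF1 x t))

/-- Uniform exponential convergence of the restarted transition function to its
invariant measure: `|q_ν(Γ) − P̃_ν(t,x,Γ)| ≤ e^{-λt}` for all `x` and `Γ`. -/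
theorem restart_uniform_exponential_bound
    {E : Type*} [MeasurableSpace E]
    (P : ℝ → E → Measure E)
    (hprob : ∀ t x, IsProbabilityMeasure (P t x))
    (hmeas : ∀ Γ : Set E, MeasurableSet Γ → Measurable (fun p : ℝ × E => P p.1 p.2 Γ))
    (hCK : ∀ t s : ℝ, 0 ≤ t → 0 ≤ s → ∀ x : E, ∀ Γ : Set E, MeasurableSet Γ →
      P (t + s) x Γ = ∫⁻ y, P s y Γ ∂(P t x))
    (lam : ℝ) (hlam : 0 < lam)
    (ν : Measure E) [IsProbabilityMeasure ν] :
    ∀ t : ℝ, 0 ≤ t → ∀ x : E, ∀ Γ : Set E, MeasurableSet Γ →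
      |(∫ y, (∫ s in Set.Ioi (0 : ℝ), lam * Real.exp (-(lam * s)) * (P s y Γ).toReal) ∂ν) -
        (Real.exp (-(lam * t)) * (P t x Γ).toReal +
          ∫ y, (∫ s in Set.Ioc (0 : ℝ) t,
            lam * Real.exp (-(lam * s)) * (P s y Γ).toReal) ∂ν)|
        ≤ Real.exp (-(lam * t)) :=
  restart_uniform_exponential_bound_general P hprob hmeas lam hlam ν
end

section
/- Let P be an honest transition function with Chapman–Kolmogorov, λ > 0, ν a probability measure, 𝑃̃_ν the restarted kernel and q_ν its invariant measure as above. Then the total variation distance satisfies ‖𝑃̃_ν(t,x,·) − q_ν(·)‖_{TV} ≤ 2 e^{-λt} for all x ∈ E and t ≥ 0; hence the restarted process is exponentially ergodic with index λ and constant function M(x) = 2. -/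
/-!
Split the restart density at time `t`: `P̃_ν(t,x,·) = e^{-λt} P(t,x,·) + m_t` and `q_ν = m_t + τ_t`,
where `m_t` collects the restarts in `(0,t]` and `τ_t` the restarts after `t`. The common part `m_t`
cancels in `P̃_ν(t,x,·) − q_ν`, which is therefore a difference of two measures of mass `e^{-λt}`.
-/

open Real MeasureTheory

namespace MeasureTheory

variable {X Y : Type*} [MeasurableSpace X] [MeasurableSpace Y]

theorem SignedMeasure.totalVariation_toSignedMeasure_sub_le_of_le_add
    {μ ν a b : Measure X} [IsFiniteMeasure μ] [IsFiniteMeasure ν]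
    (hμ : μ ≤ a + ν) (hν : ν ≤ b + μ) :
    (μ.toSignedMeasure - ν.toSignedMeasure).totalVariation ≤ a + b := by
  rw [totalVariation, Measure.toJordanDecomposition_toSignedMeasure_sub]
  exact add_le_add (Measure.sub_le_of_le_add hμ) (Measure.sub_le_of_le_add hν)

namespace Measure

theorem add_bind (μ ν : Measure X) {κ : X → Measure Y} (hκ : Measurable κ) :
    (μ + ν).bind κ = μ.bind κ + ν.bind κ := by
  ext s hs
  simp only [add_apply, bind_apply hs hκ.aemeasurable, lintegral_add_measure]

theorem bind_apply_univ (μ : Measure X) {κ : X → Measure Y} [∀ x, IsProbabilityMeasure (κ x)]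
    (hκ : Measurable κ) : μ.bind κ Set.univ = μ Set.univ := by
  simp [bind_apply MeasurableSet.univ hκ.aemeasurable]

theorem isProbabilityMeasure_bind (μ : Measure X) [IsProbabilityMeasure μ] {κ : X → Measure Y}
    [∀ x, IsProbabilityMeasure (κ x)] (hκ : Measurable κ) : IsProbabilityMeasure (μ.bind κ) :=
  ⟨by rw [bind_apply_univ μ hκ, measure_univ]⟩

theorem measurable_bind_of_measurable_uncurry {Z : Type*} [MeasurableSpace Z] (μ : Measure X)
    [SFinite μ] {κ : Z → X → Measure Y} (hκ : Measurable (Function.uncurry κ)) :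
    Measurable fun z => μ.bind (κ z) := by
  refine measurable_of_measurable_coe _ fun s hs => ?_
  have hκz : ∀ z, Measurable (κ z) := fun z => hκ.comp measurable_prodMk_left
  simp only [bind_apply hs (hκz _).aemeasurable]
  exact ((measurable_coe hs).comp hκ).lintegral_prod_right'

end Measure

end MeasureTheory

theorem lintegral_Ioi_exponential_density {lam : ℝ} (hlam : 0 < lam) (t : ℝ) :
    ∫⁻ s in Set.Ioi t, ENNReal.ofReal (lam * exp (-(lam * s)))
      = ENNReal.ofReal (exp (-(lam * t))) := by
  have hint : IntegrableOn (fun s => lam * exp (-lam * s)) (Set.Ioi t) :=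
    (integrableOn_exp_mul_Ioi (neg_lt_zero.mpr hlam) t).const_mul lam
  simp_rw [← neg_mul]
  rw [← ofReal_integral_eq_lintegral_ofReal hint
    (Filter.Eventually.of_forall fun s => by positivity),
    integral_const_mul, integral_exp_mul_Ioi (neg_lt_zero.mpr hlam)]
  congr 1
  field_simp

theorem restart_exponential_ergodicity_tv_general
    {E : Type*} [MeasurableSpace E]
    (P : ℝ → E → Measure E)
    (hprob : ∀ t x, IsProbabilityMeasure (P t x))
    (hmeas : ∀ Γ : Set E, MeasurableSet Γ → Measurable (fun p : ℝ × E => P p.1 p.2 Γ))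
    (lam : ℝ) (hlam : 0 < lam)
    (ν : Measure E) [IsProbabilityMeasure ν]
    (Ptilde : ℝ → E → Measure E)
    (hPtilde : ∀ t x, Ptilde t x =
      ENNReal.ofReal (Real.exp (-(lam * t))) • P t x +
        Measure.bind
          ((volume.restrict (Set.Ioc (0 : ℝ) t)).withDensity
            (fun s => ENNReal.ofReal (lam * Real.exp (-(lam * s)))))
          (fun s => Measure.bind ν (fun y => P s y)))
    (q : Measure E)
    (hq : q = Measure.bind
      ((volume.restrict (Set.Ioi (0 : ℝ))).withDensity
        (fun s => ENNReal.ofReal (lam * Real.exp (-(lam * s)))))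
      (fun s => Measure.bind ν (fun y => P s y)))
    [∀ t x, IsFiniteMeasure (Ptilde t x)] [IsFiniteMeasure q] :
    ∀ t : ℝ, 0 ≤ t → ∀ x : E,
      ((Ptilde t x).toSignedMeasure - q.toSignedMeasure).totalVariation Set.univ
        ≤ ENNReal.ofReal (2 * Real.exp (-(lam * t))) := by
  intro t ht x
  have hP : Measurable (Function.uncurry P) := Measure.measurable_of_measurable_coe _ hmeas
  have hκ : Measurable fun s => ν.bind (P s) := Measure.measurable_bind_of_measurable_uncurry ν hP
  have : ∀ s, IsProbabilityMeasure (ν.bind (P s)) := fun s =>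
    have := hprob s
    Measure.isProbabilityMeasure_bind ν (hP.comp measurable_prodMk_left)
  set ρ : ℝ → ENNReal := fun s => ENNReal.ofReal (lam * exp (-(lam * s)))
  set κ : ℝ → Measure E := fun s => ν.bind (P s)
  set a := ENNReal.ofReal (exp (-(lam * t))) • P t x
  set m := ((volume.restrict (Set.Ioc 0 t)).withDensity ρ).bind κ
  set τ := ((volume.restrict (Set.Ioi t)).withDensity ρ).bind κ
  have hPt : Ptilde t x = a + m := hPtilde t x
  have hqt : q = m + τ := by
    rw [hq, ← Set.Ioc_union_Ioi_eq_Ioi ht, Measure.restrict_union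
      (Set.Ioc_disjoint_Ioi le_rfl) measurableSet_Ioi, withDensity_add_measure,
      Measure.add_bind _ _ hκ]
  have hPt_le : Ptilde t x ≤ a + q := by
    rw [hPt, hqt]
    exact add_le_add le_rfl (Measure.le_add_right le_rfl)
  have hq_le : q ≤ τ + Ptilde t x := by
    rw [hPt, hqt, add_comm m]
    exact add_le_add le_rfl (Measure.le_add_left le_rfl)
  have ha : a Set.univ = ENNReal.ofReal (exp (-(lam * t))) := by
    have := hprob t x
    rw [Measure.smul_apply, measure_univ, smul_eq_mul, mul_one]
  have hτ : τ Set.univ = ENNReal.ofReal (exp (-(lam * t))) := by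
    rw [Measure.bind_apply_univ _ hκ, withDensity_apply _ .univ, Measure.restrict_univ,
      lintegral_Ioi_exponential_density hlam]
  calc _ ≤ (a + τ) Set.univ :=
        SignedMeasure.totalVariation_toSignedMeasure_sub_le_of_le_add hPt_le hq_le _
    _ = ENNReal.ofReal (2 * exp (-(lam * t))) := by
      rw [Measure.add_apply, ha, hτ, ← ENNReal.ofReal_add (exp_nonneg _) (exp_nonneg _), two_mul]

/-- Exponential ergodicity of the restarted process in total variation:
`‖P̃_ν(t,x,·) − q_ν(·)‖_{TV} ≤ 2 e^{-λt}`. -/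
theorem restart_exponential_ergodicity_tv
    {E : Type*} [MeasurableSpace E]
    (P : ℝ → E → Measure E)
    (hprob : ∀ t x, IsProbabilityMeasure (P t x))
    (hmeas : ∀ Γ : Set E, MeasurableSet Γ → Measurable (fun p : ℝ × E => P p.1 p.2 Γ))
    (hCK : ∀ t s : ℝ, 0 ≤ t → 0 ≤ s → ∀ x : E, ∀ Γ : Set E, MeasurableSet Γ →
      P (t + s) x Γ = ∫⁻ y, P s y Γ ∂(P t x))
    (lam : ℝ) (hlam : 0 < lam)
    (ν : Measure E) [IsProbabilityMeasure ν]
    (Ptilde : ℝ → E → Measure E)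
    (hPtilde : ∀ t x, Ptilde t x =
      ENNReal.ofReal (Real.exp (-(lam * t))) • P t x +
        Measure.bind
          ((volume.restrict (Set.Ioc (0 : ℝ) t)).withDensity
            (fun s => ENNReal.ofReal (lam * Real.exp (-(lam * s)))))
          (fun s => Measure.bind ν (fun y => P s y)))
    (q : Measure E)
    (hq : q = Measure.bind
      ((volume.restrict (Set.Ioi (0 : ℝ))).withDensity
        (fun s => ENNReal.ofReal (lam * Real.exp (-(lam * s)))))
      (fun s => Measure.bind ν (fun y => P s y)))
    [∀ t x, IsFiniteMeasure (Ptilde t x)] [IsFiniteMeasure q] :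
    ∀ t : ℝ, 0 ≤ t → ∀ x : E,
      ((Ptilde t x).toSignedMeasure - q.toSignedMeasure).totalVariation Set.univ
        ≤ ENNReal.ofReal (2 * Real.exp (-(lam * t))) :=
  restart_exponential_ergodicity_tv_general P hprob hmeas lam hlam ν Ptilde hPtilde q hq
end

section
/- Fix λ > 0, μ, σ > 0, x ∈ ℝ, and a probability measure ν on ℝ with finite second moment. Define h(t) = e^{-λt}((x+μt)² + σ²t) + ∫_ℝ ∫_0^t λ e^{-λs} ((y+μs)² + σ²s) ds ν(dy). Then h(t) → σ²/λ + 2μ²/λ² + ∫_ℝ (2μy/λ + y²) ν(dy) as t → ∞. -/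
/-!
Write `m(y, s) = (y + μs)² + σ²s` and `Q = m + ∂ₛm/λ + ∂ₛ²m/λ²`, i.e.
`Q(y, t) = ∫₀^∞ λe^{-λu} m(y, t + u) du`. Then `-e^{-λs} Q(y, s)` is an antiderivative of
`λe^{-λs} m(y, s)`, so the inner integral equals `Q(y, 0) - e^{-λt} Q(y, t)`. As `Q ≥ 0`, it is
bounded by `Q(y, 0)`, which is `ν`-integrable, and tends to it because `e^{-λt}` beats every
polynomial in `t`; dominated convergence gives the limit `∫ Q(y, 0) dν`, and the same decay kills
the term `e^{-λt} m(x, t)`.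
-/

open Real MeasureTheory Filter Topology

lemma tendsto_exp_neg_mul_mul_quadratic {lam : ℝ} (hlam : 0 < lam) (a b c : ℝ) :
    Tendsto (fun t ↦ exp (-(lam * t)) * (a + b * t + c * t ^ 2)) atTop (𝓝 0) := by
  have hpow (n : ℕ) : Tendsto (fun t ↦ t ^ n * exp (-(lam * t))) atTop (𝓝 0) := by
    have := ((tendsto_pow_mul_exp_neg_atTop_nhds_zero n).comp
      (tendsto_id.const_mul_atTop hlam)).const_mul (lam⁻¹ ^ n)
    rw [mul_zero] at this
    refine this.congr fun t ↦ ?_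
    simp only [Function.comp_apply, id]
    rw [← mul_assoc, ← mul_pow, inv_mul_cancel_left₀ hlam.ne']
  simpa using (((hpow 0).const_mul a).add ((hpow 1).const_mul b)).add ((hpow 2).const_mul c)
    |>.congr fun t ↦ by ring

def bmSecondMoment (mu sigma y s : ℝ) : ℝ := (y + mu * s) ^ 2 + sigma ^ 2 * s

noncomputable def bmResolventMoment (lam mu sigma y s : ℝ) : ℝ :=
  bmSecondMoment mu sigma y s + (2 * mu * (y + mu * s) + sigma ^ 2) / lam + 2 * mu ^ 2 / lam ^ 2

section

variable {lam : ℝ} (mu sigma : ℝ)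

lemma bmSecondMoment_nonneg (y : ℝ) {s : ℝ} (hs : 0 ≤ s) : 0 ≤ bmSecondMoment mu sigma y s := by
  unfold bmSecondMoment; positivity

lemma bmResolventMoment_nonneg (hlam : 0 < lam) (y : ℝ) {s : ℝ} (hs : 0 ≤ s) :
    0 ≤ bmResolventMoment lam mu sigma y s := by
  have hsq : bmResolventMoment lam mu sigma y s
      = (y + mu * s + mu / lam) ^ 2 + (mu / lam) ^ 2 + sigma ^ 2 * (s + 1 / lam) := by
    unfold bmResolventMoment bmSecondMoment; field_simp; ring
  rw [hsq]; positivity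

lemma hasDerivAt_bmResolventMoment (y s : ℝ) :
    HasDerivAt (bmResolventMoment lam mu sigma y)
      (2 * mu * (y + mu * s) + sigma ^ 2 + 2 * mu ^ 2 / lam) s := by
  have hu : HasDerivAt (fun s ↦ y + mu * s) mu s := by
    simpa using ((hasDerivAt_id' s).const_mul mu).const_add y
  refine ((((hu.fun_pow 2).fun_add ((hasDerivAt_id' s).const_mul (sigma ^ 2))).fun_add
    (((hu.const_mul (2 * mu)).add_const (sigma ^ 2)).div_const lam)).add_const
      (2 * mu ^ 2 / lam ^ 2)).congr_deriv ?_
  push_cast; ring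

lemma hasDerivAt_neg_exp_mul_bmResolventMoment (hlam : lam ≠ 0) (y s : ℝ) :
    HasDerivAt (fun s ↦ -(exp (-(lam * s)) * bmResolventMoment lam mu sigma y s))
      (lam * exp (-(lam * s)) * bmSecondMoment mu sigma y s) s := by
  have hexp : HasDerivAt (fun s ↦ exp (-(lam * s))) (exp (-(lam * s)) * -lam) s := by
    simpa using ((hasDerivAt_id' s).const_mul lam).neg.exp
  refine ((hexp.fun_mul (hasDerivAt_bmResolventMoment mu sigma y s)).fun_neg).congr_deriv ?_
  unfold bmResolventMoment bmSecondMoment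
  field_simp; ring

lemma setIntegral_Ioc_exp_mul_bmSecondMoment (hlam : lam ≠ 0) (y : ℝ) {t : ℝ} (ht : 0 ≤ t) :
    ∫ s in Set.Ioc 0 t, lam * exp (-(lam * s)) * bmSecondMoment mu sigma y s
      = bmResolventMoment lam mu sigma y 0
        - exp (-(lam * t)) * bmResolventMoment lam mu sigma y t := by
  rw [← intervalIntegral.integral_of_le ht, intervalIntegral.integral_eq_sub_of_hasDerivAt
    (fun s _ ↦ hasDerivAt_neg_exp_mul_bmResolventMoment mu sigma hlam y s)
    (by unfold bmSecondMoment; exact (by fun_prop : Continuous _).intervalIntegrable _ _)]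
  simp only [mul_zero, neg_zero, exp_zero, one_mul, sub_neg_eq_add]
  ring

lemma tendsto_exp_neg_mul_mul_bmSecondMoment (hlam : 0 < lam) (x : ℝ) :
    Tendsto (fun t ↦ exp (-(lam * t)) * bmSecondMoment mu sigma x t) atTop (𝓝 0) :=
  (tendsto_exp_neg_mul_mul_quadratic hlam (x ^ 2) (2 * mu * x + sigma ^ 2) (mu ^ 2)).congr
    fun t ↦ by unfold bmSecondMoment; ring

lemma tendsto_exp_neg_mul_mul_bmResolventMoment (hlam : 0 < lam) (y : ℝ) :
    Tendsto (fun t ↦ exp (-(lam * t)) * bmResolventMoment lam mu sigma y t) atTop (𝓝 0) :=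
  (tendsto_exp_neg_mul_mul_quadratic hlam
    (y ^ 2 + (2 * mu * y + sigma ^ 2) / lam + 2 * mu ^ 2 / lam ^ 2)
    (2 * mu * y + sigma ^ 2 + 2 * mu ^ 2 / lam) (mu ^ 2)).congr
    fun t ↦ by unfold bmResolventMoment bmSecondMoment; ring

lemma tendsto_setIntegral_Ioc_exp_mul_bmSecondMoment (hlam : 0 < lam) (y : ℝ) :
    Tendsto (fun t ↦ ∫ s in Set.Ioc 0 t, lam * exp (-(lam * s)) * bmSecondMoment mu sigma y s)
      atTop (𝓝 (bmResolventMoment lam mu sigma y 0)) := by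
  have hlim := (tendsto_exp_neg_mul_mul_bmResolventMoment mu sigma hlam y).const_sub
    (bmResolventMoment lam mu sigma y 0)
  rw [sub_zero] at hlim
  refine hlim.congr' ?_
  filter_upwards [eventually_ge_atTop 0] with t ht
  exact (setIntegral_Ioc_exp_mul_bmSecondMoment mu sigma hlam.ne' y ht).symm

lemma tendsto_integral_setIntegral_Ioc_exp_mul_bmSecondMoment (hlam : 0 < lam) (ν : Measure ℝ)
    (hQ : Integrable (fun y ↦ bmResolventMoment lam mu sigma y 0) ν) :
    Tendsto (fun t ↦ ∫ y, (∫ s in Set.Ioc 0 t,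
        lam * exp (-(lam * s)) * bmSecondMoment mu sigma y s) ∂ν)
      atTop (𝓝 (∫ y, bmResolventMoment lam mu sigma y 0 ∂ν)) := by
  refine tendsto_integral_filter_of_dominated_convergence _ ?_ ?_ hQ
    (ae_of_all _ (tendsto_setIntegral_Ioc_exp_mul_bmSecondMoment mu sigma hlam))
  · refine Eventually.of_forall fun t ↦ StronglyMeasurable.aestronglyMeasurable ?_
    refine StronglyMeasurable.integral_prod_right (f := fun y s ↦ _) ?_
    unfold bmSecondMoment
    exact (by fun_prop : Continuous _).stronglyMeasurable
  · filter_upwards [eventually_ge_atTop 0] with t ht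
    refine ae_of_all _ fun y ↦ ?_
    have hm : 0 ≤ ∫ s in Set.Ioc 0 t, lam * exp (-(lam * s)) * bmSecondMoment mu sigma y s :=
      setIntegral_nonneg measurableSet_Ioc fun s hs ↦
        mul_nonneg (by positivity) (bmSecondMoment_nonneg mu sigma y hs.1.le)
    rw [Real.norm_of_nonneg hm, setIntegral_Ioc_exp_mul_bmSecondMoment mu sigma hlam.ne' y ht,
      sub_le_self_iff]
    exact mul_nonneg (exp_nonneg _) (bmResolventMoment_nonneg mu sigma hlam y ht)

lemma bmResolventMoment_zero (y : ℝ) :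
    bmResolventMoment lam mu sigma y 0
      = 2 * mu * y / lam + y ^ 2 + (sigma ^ 2 / lam + 2 * mu ^ 2 / lam ^ 2) := by
  unfold bmResolventMoment bmSecondMoment; ring

end

theorem restarted_bm_second_moment_general
    (lam mu sigma x : ℝ) (hlam : 0 < lam)
    (ν : Measure ℝ) [IsProbabilityMeasure ν]
    (hint1 : Integrable (fun y : ℝ => y) ν)
    (hint2 : Integrable (fun y : ℝ => y ^ 2) ν) :
    Filter.Tendsto
      (fun t : ℝ =>
        Real.exp (-(lam * t)) * ((x + mu * t) ^ 2 + sigma ^ 2 * t) +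
          ∫ y, (∫ s in Set.Ioc (0 : ℝ) t,
            lam * Real.exp (-(lam * s)) * ((y + mu * s) ^ 2 + sigma ^ 2 * s)) ∂ν)
      Filter.atTop
      (nhds (sigma ^ 2 / lam + 2 * mu ^ 2 / lam ^ 2 +
        ∫ y, (2 * mu * y / lam + y ^ 2) ∂ν)) := by
  have hint : Integrable (fun y ↦ 2 * mu * y / lam + y ^ 2) ν :=
    ((hint1.const_mul (2 * mu)).div_const lam).add hint2
  have hQ : Integrable (fun y ↦ bmResolventMoment lam mu sigma y 0) ν :=
    (integrable_congr (ae_of_all _ (bmResolventMoment_zero mu sigma))).mpr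
      (hint.add (integrable_const _))
  have hQ_integral : ∫ y, bmResolventMoment lam mu sigma y 0 ∂ν
      = sigma ^ 2 / lam + 2 * mu ^ 2 / lam ^ 2 + ∫ y, (2 * mu * y / lam + y ^ 2) ∂ν := by
    simp only [bmResolventMoment_zero]
    rw [integral_add hint (integrable_const _), integral_const]
    simp only [probReal_univ, one_smul]
    ring
  rw [← hQ_integral, ← zero_add (∫ y, _ ∂ν)]
  exact (tendsto_exp_neg_mul_mul_bmSecondMoment mu sigma hlam x).add
    (tendsto_integral_setIntegral_Ioc_exp_mul_bmSecondMoment mu sigma hlam ν hQ)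

/-- Second moment of Brownian motion with drift restarted from `ν` at rate `λ`:
it converges to `σ²/λ + 2μ²/λ² + ∫ (2μy/λ + y²) dν`. -/
theorem restarted_bm_second_moment
    (lam mu sigma x : ℝ) (hlam : 0 < lam) (hsigma : 0 < sigma)
    (ν : Measure ℝ) [IsProbabilityMeasure ν]
    (hint1 : Integrable (fun y : ℝ => y) ν)
    (hint2 : Integrable (fun y : ℝ => y ^ 2) ν) :
    Filter.Tendsto
      (fun t : ℝ =>
        Real.exp (-(lam * t)) * ((x + mu * t) ^ 2 + sigma ^ 2 * t) +
          ∫ y, (∫ s in Set.Ioc (0 : ℝ) t,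
            lam * Real.exp (-(lam * s)) * ((y + mu * s) ^ 2 + sigma ^ 2 * s)) ∂ν)
      Filter.atTop
      (nhds (sigma ^ 2 / lam + 2 * mu ^ 2 / lam ^ 2 +
        ∫ y, (2 * mu * y / lam + y ^ 2) ∂ν)) :=
  restarted_bm_second_moment_general lam mu sigma x hlam ν hint1 hint2
end

section
/- Fix λ > 0, μ, σ > 0, and a probability measure ν on ℝ with finite second moment, with m₁ = ∫ y ν(dy), m₂ = ∫ y² ν(dy). For the Brownian motion with drift restarted from ν at rate λ, the limiting variance equals lim_{t→∞} (E_x[X̃²(t)] − (E_x[X̃(t)])²) = m₂ − m₁² + σ²/λ + μ²/λ², where E_x[X̃(t)] = e^{-λt}(x+μt) + ∫∫_0^t λe^{-λs}(y+μs) ds ν(dy) and E_x[X̃²(t)] = e^{-λt}((x+μt)²+σ²t) + ∫∫_0^t λe^{-λs}((y+μs)²+σ²s) ds ν(dy). -/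
/-!
If `λ f = λ g - g'`, then `-e^{-λs} g(s)` is an antiderivative of `λ e^{-λs} f(s)`, and `g` is a
polynomial when `f` is; this gives the inner time integrals in closed form. Integrating over `ν`
leaves, for each moment, a constant plus `(a + b t) e^{-λt}` (the `t²`-terms of the second moment
cancel), so the mean tends to `m₁ + μ/λ`, the second moment to `m₂ + (2μm₁ + σ²)/λ + 2μ²/λ²`,
and the variance to the difference of the latter and the square of the former.
-/

open Real MeasureTheory Filter Topology

lemma integral_Ioc_mul_exp_neg_eq_of_hasDerivAt {lam t : ℝ} {f g g' : ℝ → ℝ}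
    (hf : Continuous f) (hg : ∀ s, HasDerivAt g (g' s) s)
    (hfg : ∀ s, lam * f s = lam * g s - g' s) (ht : 0 ≤ t) :
    ∫ s in Set.Ioc 0 t, lam * exp (-(lam * s)) * f s = g 0 - exp (-(lam * t)) * g t := by
  have hderiv : ∀ s ∈ Set.uIcc 0 t,
      HasDerivAt (fun s => -(exp (-(lam * s)) * g s)) (lam * exp (-(lam * s)) * f s) s := by
    intro s _
    have hexp : HasDerivAt (fun s => exp (-(lam * s))) (exp (-(lam * s)) * -lam) s := by
      simpa using ((hasDerivAt_id s).const_mul lam).neg.exp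
    refine (hexp.mul (hg s)).neg.congr_deriv ?_
    linear_combination -exp (-(lam * s)) * hfg s
  rw [← intervalIntegral.integral_of_le ht, intervalIntegral.integral_eq_sub_of_hasDerivAt hderiv
    ((by fun_prop : Continuous fun s => lam * exp (-(lam * s)) * f s).intervalIntegrable 0 t)]
  simp only [mul_zero, neg_zero, exp_zero, one_mul]
  ring

lemma integral_Ioc_mul_exp_neg_affine {lam : ℝ} (hlam : lam ≠ 0) (mu y : ℝ) {t : ℝ}
    (ht : 0 ≤ t) :
    ∫ s in Set.Ioc 0 t, lam * exp (-(lam * s)) * (y + mu * s) =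
      y + mu / lam - exp (-(lam * t)) * (y + mu * t + mu / lam) := by
  have hg (s : ℝ) : HasDerivAt (fun s => y + mu * s + mu / lam) mu s := by
    simpa using (((hasDerivAt_id s).const_mul mu).const_add y).add_const (mu / lam)
  simpa using integral_Ioc_mul_exp_neg_eq_of_hasDerivAt (by fun_prop) hg
    (fun s => by field_simp; ring) ht

lemma integral_Ioc_mul_exp_neg_quadratic {lam : ℝ} (hlam : lam ≠ 0) (mu sigma y : ℝ) {t : ℝ}
    (ht : 0 ≤ t) :
    ∫ s in Set.Ioc 0 t, lam * exp (-(lam * s)) * ((y + mu * s) ^ 2 + sigma ^ 2 * s) =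
      y ^ 2 + (2 * mu * y + sigma ^ 2) / lam + 2 * mu ^ 2 / lam ^ 2 -
        exp (-(lam * t)) * ((y + mu * t) ^ 2 + sigma ^ 2 * t +
          (2 * mu * (y + mu * t) + sigma ^ 2) / lam + 2 * mu ^ 2 / lam ^ 2) := by
  have hg (s : ℝ) : HasDerivAt
      (fun s => (y + mu * s) ^ 2 + sigma ^ 2 * s +
        (2 * mu * (y + mu * s) + sigma ^ 2) / lam + 2 * mu ^ 2 / lam ^ 2)
      (2 * (y + mu * s) * mu + sigma ^ 2 + 2 * mu * mu / lam) s := by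
    have hlin : HasDerivAt (fun s => y + mu * s) mu s := by
      simpa using ((hasDerivAt_id s).const_mul mu).const_add y
    have hsq : HasDerivAt (fun s => (y + mu * s) ^ 2) (2 * (y + mu * s) * mu) s := by
      simpa using hlin.fun_pow 2
    have hsigma : HasDerivAt (fun s => sigma ^ 2 * s) (sigma ^ 2) s := by
      simpa using (hasDerivAt_id s).const_mul (sigma ^ 2)
    have hdiv : HasDerivAt (fun s => (2 * mu * (y + mu * s) + sigma ^ 2) / lam)
        (2 * mu * mu / lam) s := by
      simpa using ((hlin.const_mul (2 * mu)).add_const (sigma ^ 2)).div_const lam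
    exact ((hsq.add hsigma).add hdiv).add_const _
  simpa using integral_Ioc_mul_exp_neg_eq_of_hasDerivAt (by fun_prop) hg
    (fun s => by field_simp; ring) ht

lemma tendsto_affine_mul_exp_neg_atTop {lam : ℝ} (hlam : 0 < lam) (a b : ℝ) :
    Tendsto (fun t => (a + b * t) * exp (-(lam * t))) atTop (𝓝 0) := by
  have hmul : Tendsto (fun t => lam * t) atTop atTop := tendsto_id.const_mul_atTop hlam
  have hexp : Tendsto (fun t => exp (-(lam * t))) atTop (𝓝 0) :=
    tendsto_exp_atBot.comp (tendsto_neg_atTop_atBot.comp hmul)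
  have hmul_exp : Tendsto (fun t => t * exp (-(lam * t))) atTop (𝓝 0) := by
    have h := ((tendsto_pow_mul_exp_neg_atTop_nhds_zero 1).comp hmul).const_mul lam⁻¹
    rw [mul_zero] at h
    refine h.congr fun t => ?_
    simp only [Function.comp_apply, pow_one]
    field_simp
  simpa [add_mul, mul_assoc] using (hexp.const_mul a).add (hmul_exp.const_mul b)

section Moments

variable {ν : Measure ℝ} [IsProbabilityMeasure ν]

lemma integral_affine (hint1 : Integrable (fun y : ℝ => y) ν) (a b : ℝ) :
    ∫ y, a * y + b ∂ν = a * ∫ y, y ∂ν + b := by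
  rw [integral_add (hint1.const_mul a) (integrable_const b), integral_const_mul]
  simp

lemma integral_quadratic (hint1 : Integrable (fun y : ℝ => y) ν)
    (hint2 : Integrable (fun y : ℝ => y ^ 2) ν) (a b c : ℝ) :
    ∫ y, a * y ^ 2 + b * y + c ∂ν = a * ∫ y, y ^ 2 ∂ν + b * ∫ y, y ∂ν + c := by
  have hint : Integrable (fun y : ℝ => a * y ^ 2 + b * y) ν :=
    (hint2.const_mul a).add (hint1.const_mul b)
  rw [integral_add hint (integrable_const c),
    integral_add (hint2.const_mul a) (hint1.const_mul b), integral_const_mul, integral_const_mul]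
  simp

lemma tendsto_restarted_mean {lam : ℝ} (hlam : 0 < lam) (mu x : ℝ)
    (hint1 : Integrable (fun y : ℝ => y) ν) :
    Tendsto (fun t => exp (-(lam * t)) * (x + mu * t) +
        ∫ y, (∫ s in Set.Ioc 0 t, lam * exp (-(lam * s)) * (y + mu * s)) ∂ν)
      atTop (𝓝 ((∫ y, y ∂ν) + mu / lam)) := by
  set m₁ := ∫ y, y ∂ν
  have h :=
    (tendsto_affine_mul_exp_neg_atTop hlam (x - m₁ - mu / lam) 0).const_add (m₁ + mu / lam)
  rw [add_zero] at h
  refine h.congr' ?_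
  filter_upwards [eventually_ge_atTop 0] with t ht
  have hy (y : ℝ) : ∫ s in Set.Ioc 0 t, lam * exp (-(lam * s)) * (y + mu * s) =
      (1 - exp (-(lam * t))) * y + (mu / lam - exp (-(lam * t)) * (mu * t + mu / lam)) := by
    rw [integral_Ioc_mul_exp_neg_affine hlam.ne' mu y ht]
    ring
  simp_rw [hy, integral_affine hint1]
  ring

lemma tendsto_restarted_second_moment {lam : ℝ} (hlam : 0 < lam) (mu sigma x : ℝ)
    (hint1 : Integrable (fun y : ℝ => y) ν)
    (hint2 : Integrable (fun y : ℝ => y ^ 2) ν) :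
    Tendsto (fun t => exp (-(lam * t)) * ((x + mu * t) ^ 2 + sigma ^ 2 * t) +
        ∫ y, (∫ s in Set.Ioc 0 t,
          lam * exp (-(lam * s)) * ((y + mu * s) ^ 2 + sigma ^ 2 * s)) ∂ν)
      atTop (𝓝 ((∫ y, y ^ 2 ∂ν) + (2 * mu * ∫ y, y ∂ν) / lam + sigma ^ 2 / lam +
        2 * mu ^ 2 / lam ^ 2)) := by
  set m₁ := ∫ y, y ∂ν
  set m₂ := ∫ y, y ^ 2 ∂ν
  have h := (tendsto_affine_mul_exp_neg_atTop hlam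
    (x ^ 2 - m₂ - 2 * mu * m₁ / lam - sigma ^ 2 / lam - 2 * mu ^ 2 / lam ^ 2)
    (2 * x * mu - 2 * mu * m₁ - 2 * mu ^ 2 / lam)).const_add
    (m₂ + 2 * mu * m₁ / lam + sigma ^ 2 / lam + 2 * mu ^ 2 / lam ^ 2)
  rw [add_zero] at h
  refine h.congr' ?_
  filter_upwards [eventually_ge_atTop 0] with t ht
  have hy (y : ℝ) : ∫ s in Set.Ioc 0 t,
        lam * exp (-(lam * s)) * ((y + mu * s) ^ 2 + sigma ^ 2 * s) =
      (1 - exp (-(lam * t))) * y ^ 2 +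
        (2 * mu / lam - exp (-(lam * t)) * (2 * mu * t + 2 * mu / lam)) * y +
        (sigma ^ 2 / lam + 2 * mu ^ 2 / lam ^ 2 - exp (-(lam * t)) *
          (mu ^ 2 * t ^ 2 + sigma ^ 2 * t + (2 * mu ^ 2 * t + sigma ^ 2) / lam +
            2 * mu ^ 2 / lam ^ 2)) := by
    rw [integral_Ioc_mul_exp_neg_quadratic hlam.ne' mu sigma y ht]
    ring
  simp_rw [hy, integral_quadratic hint1 hint2]
  ring

end Moments

theorem restarted_bm_limiting_variance_general
    (lam mu sigma x : ℝ) (hlam : 0 < lam)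
    (ν : Measure ℝ) [IsProbabilityMeasure ν]
    (hint1 : Integrable (fun y : ℝ => y) ν)
    (hint2 : Integrable (fun y : ℝ => y ^ 2) ν) :
    Filter.Tendsto
      (fun t : ℝ =>
        (Real.exp (-(lam * t)) * ((x + mu * t) ^ 2 + sigma ^ 2 * t) +
          ∫ y, (∫ s in Set.Ioc (0 : ℝ) t,
            lam * Real.exp (-(lam * s)) * ((y + mu * s) ^ 2 + sigma ^ 2 * s)) ∂ν) -
        (Real.exp (-(lam * t)) * (x + mu * t) +
          ∫ y, (∫ s in Set.Ioc (0 : ℝ) t,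
            lam * Real.exp (-(lam * s)) * (y + mu * s)) ∂ν) ^ 2)
      Filter.atTop
      (nhds ((∫ y, y ^ 2 ∂ν) - (∫ y, y ∂ν) ^ 2 +
        sigma ^ 2 / lam + mu ^ 2 / lam ^ 2)) := by
  convert (tendsto_restarted_second_moment hlam mu sigma x hint1 hint2).sub
    ((tendsto_restarted_mean hlam mu x hint1).pow 2) using 2
  field_simp
  ring

/-- Limiting variance of Brownian motion with drift restarted from `ν` at rate `λ`:
`m₂ − m₁² + σ²/λ + μ²/λ²`. -/
theorem restarted_bm_limiting_variance
    (lam mu sigma x : ℝ) (hlam : 0 < lam) (hsigma : 0 < sigma)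
    (ν : Measure ℝ) [IsProbabilityMeasure ν]
    (hint1 : Integrable (fun y : ℝ => y) ν)
    (hint2 : Integrable (fun y : ℝ => y ^ 2) ν) :
    Filter.Tendsto
      (fun t : ℝ =>
        (Real.exp (-(lam * t)) * ((x + mu * t) ^ 2 + sigma ^ 2 * t) +
          ∫ y, (∫ s in Set.Ioc (0 : ℝ) t,
            lam * Real.exp (-(lam * s)) * ((y + mu * s) ^ 2 + sigma ^ 2 * s)) ∂ν) -
        (Real.exp (-(lam * t)) * (x + mu * t) +
          ∫ y, (∫ s in Set.Ioc (0 : ℝ) t,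
            lam * Real.exp (-(lam * s)) * (y + mu * s)) ∂ν) ^ 2)
      Filter.atTop
      (nhds ((∫ y, y ^ 2 ∂ν) - (∫ y, y ∂ν) ^ 2 +
        sigma ^ 2 / lam + mu ^ 2 / lam ^ 2)) :=
  restarted_bm_limiting_variance_general lam mu sigma x hlam ν hint1 hint2
end
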